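/- Let a be an aperiodic cycle of length r > 1 with distinct entries −n_i, each appearing r_i times; let s_i and B_i be as defined from blocs. Set γ₄(a) = Σ max(a_j+1, 0) − θ(a). Then P₄(a) := (1−T)^2 Σ_k γ₄(a(k)) T^k equals the sum over i of: T^{(n_i+2)/3}((2r_i−s_i) + (r_i+s_i)T) if n_i ≡ 1 (mod 3); T^{(n_i+1)/3}((r_i−s_i) + (2r_i+s_i)T) if n_i ≡ 2 (mod 3); T^{n_i/3}(−s_i + (3r_i+s_i)T + B_i(1−T)^2) if n_i ≡ 0 (mod 3). -/

import Mathlib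

/-- A function `a : ℤ → ℤ` has period `r`. -/
def CyclePeriodic (a : ℤ → ℤ) (r : ℤ) : Prop := ∀ i, a (i + r) = a i

/-- `a` is an aperiodic cycle of length `r`: it has period `r` and no smaller
positive period. -/
def CycleAperiodic (a : ℤ → ℤ) (r : ℤ) : Prop :=
  CyclePeriodic a r ∧ ∀ d : ℤ, 0 < d → d < r → ¬ CyclePeriodic a d

/-- `i` is the first index of a bloc (a maximal run of equal consecutive entries). -/
def blocStart (a : ℤ → ℤ) (i : ℤ) : Prop := a (i - 1) ≠ a i

instance (a : ℤ → ℤ) (i : ℤ) : Decidable (blocStart a i) :=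
  inferInstanceAs (Decidable (_ ≠ _))

/-- The length of the bloc starting at `i`. -/
noncomputable def blocLen (a : ℤ → ℤ) (i : ℤ) : ℤ :=
  sInf {l : ℤ | 0 < l ∧ a (i + l) ≠ a i}

/-- `ε` of the bloc starting at `i`: `1` if locally maximal (both neighbouring
blocs have strictly smaller entries), `-1` if locally minimal, `0` otherwise. -/
noncomputable def blocEps (a : ℤ → ℤ) (i : ℤ) : ℤ :=
  if a (i - 1) < a i ∧ a (i + blocLen a i) < a i then 1
  else if a i < a (i - 1) ∧ a i < a (i + blocLen a i) then -1
  else 0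

/-- `ε*` of the bloc starting at `i`: equal to `ε`, except it is `0` for a
locally maximal bloc with entry `0`. -/
noncomputable def blocEpsStar (a : ℤ → ℤ) (i : ℤ) : ℤ :=
  if a i = 0 ∧ blocEps a i = 1 then 0 else blocEps a i

/-- `i` is the first index of a positive part (a maximal run of entries `≥ 0`). -/
def partStart (a : ℤ → ℤ) (i : ℤ) : Prop := 0 ≤ a i ∧ a (i - 1) < 0

instance (a : ℤ → ℤ) (i : ℤ) : Decidable (partStart a i) :=
  inferInstanceAs (Decidable (_ ∧ _))

/-- The length of the positive part starting at `i`. -/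
noncomputable def partLen (a : ℤ → ℤ) (i : ℤ) : ℤ :=
  sInf {l : ℤ | 0 < l ∧ a (i + l) < 0}

/-- `θ(p)` for the positive part `p` starting at `i`: `l(p)` if `p` is a single
bloc of zeroes, and `1 + l(p)` otherwise.  (The case `l(p) = r` does not occur
for a part with a genuine start.) -/
noncomputable def thetaP (a : ℤ → ℤ) (i : ℤ) : ℤ :=
  if ∀ k ∈ Finset.Ico i (i + partLen a i), a k = 0 then partLen a i
  else partLen a i + 1

/-- `θ(a) = Σ θ(p)` over the positive parts of `a`, computed from the window
`[t, t+r)`; when all entries are `≥ 0` the whole cycle is a single positive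
part `p` with `θ(p) = l(p) = r`. -/
noncomputable def thetaSum (a : ℤ → ℤ) (r t : ℤ) : ℤ :=
  if ∀ j ∈ Finset.Ico t (t + r), 0 ≤ a j then r
  else ∑ i ∈ Finset.Ico t (t + r), if partStart a i then thetaP a i else 0

/-- `γ₁(a)` : the number of entries of `a` that are `≥ 0`. -/
noncomputable def gammaOne (a : ℤ → ℤ) (r t : ℤ) : ℤ :=
  ∑ i ∈ Finset.Ico t (t + r), if 0 ≤ a i then 1 else 0

/-- `γ₂(a) = Σ max(aᵢ, 0)`. -/
noncomputable def gammaTwo (a : ℤ → ℤ) (r t : ℤ) : ℤ :=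
  ∑ i ∈ Finset.Ico t (t + r), max (a i) 0

/-- `γ₃(a) = Σ ε*(b)` over the positive blocs of `a`. -/
noncomputable def gammaThree (a : ℤ → ℤ) (r t : ℤ) : ℤ :=
  ∑ i ∈ Finset.Ico t (t + r),
    if blocStart a i ∧ 0 ≤ a i then blocEpsStar a i else 0


/-!
A positive part `p` contributes `l(p) + 1 - [p is a bloc of zeroes]` to `θ`. The lengths add up
to the number of entries `≥ 0`, the number of positive parts equals `Σ ε(b)` over the blocs with
entry `≥ 0`, and the parts of zeroes are exactly the locally maximal blocs of zeroes; hence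
`θ = γ₁ + γ₃`. Both counting identities are telescoping sums over one period: the distance to
the next negative entry drops by one along a positive part, and a function constant on blocs
may be evaluated at the first or at the last index of each bloc.

So `γ₄(a(k))` is a sum over the entries `v` of `max(v + 3k, 0) - e [v + 3k ≥ 0] + β [v + 3k = 0]`,
where `e` and `β` record `ε` and the local maximality of the bloc starting at that entry. The
second difference in `k` of each term is supported on at most three consecutive `k`, determined
by `v mod 3`; grouping the entries by value gives the formula.
-/

open Finset Function

theorem Function.Periodic.sum_Ico_comp_add_one {M : Type*} [AddCommMonoid M] {f : ℤ → M}
    {r : ℤ} (hf : Periodic f r) (t : ℤ) :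
    ∑ j ∈ Ico t (t + r), f (j + 1) = ∑ j ∈ Ico t (t + r), f j := by
  rcases le_or_gt r 0 with hr | hr
  · simp [Ico_eq_empty_of_le (by omega : t + r ≤ t)]
  have hIoc : Ico (t + 1) (t + r + 1) = Ioc t (t + r) := by
    ext x; simp only [mem_Ico, mem_Ioc]; omega
  rw [sum_Ico_add', hIoc, ← sum_Ioo_add_eq_sum_Ioc (by omega),
    ← add_sum_Ioo_eq_sum_Ico (by omega), add_comm, hf t]

theorem Int.isLeast_sInf_pos {P : ℤ → Prop} (h : ∃ l, 0 < l ∧ P l) :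
    IsLeast {l : ℤ | 0 < l ∧ P l} (sInf {l : ℤ | 0 < l ∧ P l}) :=
  have hbdd : BddBelow {l : ℤ | 0 < l ∧ P l} := ⟨0, fun _ hl => hl.1.le⟩
  ⟨Int.csInf_mem h hbdd, fun _ hl => csInf_le hbdd hl⟩

theorem Function.Periodic.exists_pos_add_eq {β : Type*} {b : ℤ → β} {r : ℤ}
    (hb : Periodic b r) (hr : 0 < r) (x j : ℤ) : ∃ l, 0 < l ∧ b (j + l) = b x := by
  obtain ⟨y, hy, hxy⟩ := hb.exists_mem_Ico hr x (j + 1)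
  exact ⟨y - j, by simp only [Set.mem_Ico] at hy; omega, by rw [add_sub_cancel, hxy]⟩

section Cycle

variable {b : ℤ → ℤ} {r : ℤ}

theorem blocStart_periodic (hb : Periodic b r) :
    Periodic (blocStart b) r := fun j => by
  simp only [blocStart, hb j, show j + r - 1 = j - 1 + r by ring, hb (j - 1)]

theorem partStart_periodic (hb : Periodic b r) :
    Periodic (partStart b) r := fun j => by
  simp only [partStart, hb j, show j + r - 1 = j - 1 + r by ring, hb (j - 1)]

theorem partLen_periodic (hb : Periodic b r) :
    Periodic (partLen b) r := fun j => by
  simp only [partLen, add_right_comm j r, hb _]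

theorem blocLen_periodic (hb : Periodic b r) :
    Periodic (blocLen b) r := fun j => by
  simp only [blocLen, add_right_comm j r, hb _]

theorem blocLen_isLeast (hb : Periodic b r) (hr : 0 < r) (hnc : ∃ x y, b x ≠ b y)
    (j : ℤ) : IsLeast {l | 0 < l ∧ b (j + l) ≠ b j} (blocLen b j) := by
  obtain ⟨x, y, hxy⟩ := hnc
  obtain ⟨z, hz⟩ : ∃ z, b z ≠ b j := by
    by_cases hx : b x = b j
    · exact ⟨y, by rwa [← hx, ne_comm]⟩
    · exact ⟨x, hx⟩
  obtain ⟨l, hl, hlz⟩ := hb.exists_pos_add_eq hr z j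
  exact Int.isLeast_sInf_pos ⟨l, hl, hlz ▸ hz⟩

theorem partLen_isLeast (hb : Periodic b r) (hr : 0 < r) (hneg : ∃ x, b x < 0)
    (j : ℤ) : IsLeast {l | 0 < l ∧ b (j + l) < 0} (partLen b j) := by
  obtain ⟨x, hx⟩ := hneg
  obtain ⟨l, hl, hlx⟩ := hb.exists_pos_add_eq hr x j
  exact Int.isLeast_sInf_pos ⟨l, hl, hlx ▸ hx⟩

theorem blocLen_eq_one_of_ne {j : ℤ} (h : b (j + 1) ≠ b j) : blocLen b j = 1 :=
  IsLeast.csInf_eq ⟨⟨one_pos, h⟩, fun _ hl => hl.1⟩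

theorem partLen_eq_one_of_neg {j : ℤ} (h : b (j + 1) < 0) : partLen b j = 1 :=
  IsLeast.csInf_eq ⟨⟨one_pos, h⟩, fun _ hl => hl.1⟩

theorem add_blocLen_eq_of_eq (hb : Periodic b r) (hr : 0 < r) (hnc : ∃ x y, b x ≠ b y)
    {j : ℤ} (h : b (j + 1) = b j) : j + blocLen b j = j + 1 + blocLen b (j + 1) := by
  obtain ⟨⟨hpos, hne⟩, hmin⟩ := blocLen_isLeast hb hr hnc (j + 1)
  have : IsLeast {l | 0 < l ∧ b (j + l) ≠ b j} (blocLen b (j + 1) + 1) := by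
    refine ⟨⟨by omega, ?_⟩, fun l ⟨hl, hbl⟩ => ?_⟩
    · rwa [show j + (blocLen b (j + 1) + 1) = j + 1 + blocLen b (j + 1) by ring, ← h]
    have hl1 : l ≠ 1 := by rintro rfl; exact hbl h
    have := hmin ⟨show 0 < l - 1 by omega, by rwa [show j + 1 + (l - 1) = j + l by ring, h]⟩
    omega
  rw [blocLen, this.csInf_eq]
  ring

theorem partLen_eq_add_one_of_nonneg (hb : Periodic b r) (hr : 0 < r) (hneg : ∃ x, b x < 0)
    {j : ℤ} (h : 0 ≤ b (j + 1)) : partLen b j = partLen b (j + 1) + 1 := by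
  obtain ⟨⟨hpos, hlt⟩, hmin⟩ := partLen_isLeast hb hr hneg (j + 1)
  refine IsLeast.csInf_eq ⟨⟨by omega, ?_⟩, fun l ⟨hl, hbl⟩ => ?_⟩
  · rwa [show j + (partLen b (j + 1) + 1) = j + 1 + partLen b (j + 1) by ring]
  have hl1 : l ≠ 1 := by rintro rfl; omega
  have := hmin ⟨show 0 < l - 1 by omega, by rwa [show j + 1 + (l - 1) = j + l by ring]⟩
  omega

theorem sum_partLen_eq_count_nonneg (hb : Periodic b r) (hr : 0 < r) (hneg : ∃ x, b x < 0) (t : ℤ) :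
    ∑ j ∈ Ico t (t + r), (if partStart b j then partLen b j else 0) =
      ∑ j ∈ Ico t (t + r), (if 0 ≤ b j then 1 else 0) := by
  set g : ℤ → ℤ := fun j => if 0 ≤ b j then partLen b j else 0
  set h : ℤ → ℤ := fun j => if partStart b j then partLen b j else 0
  have hg : Periodic g r := fun j => by
    simp only [g, hb j, partLen_periodic hb j]
  have hh : Periodic h r := fun j => by
    simp only [h, partStart_periodic hb j, partLen_periodic hb j]
  have hstep : ∀ j, g (j + 1) + (if 0 ≤ b j then 1 else 0) = g j + h (j + 1) := by
    intro j
    simp only [g, h, partStart, add_sub_cancel_right]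
    by_cases h1 : 0 ≤ b (j + 1)
    · rw [partLen_eq_add_one_of_nonneg hb hr hneg h1]
      split_ifs <;> omega
    · rw [partLen_eq_one_of_neg (not_le.mp h1)]
      split_ifs <;> omega
  have := sum_congr rfl fun j (_ : j ∈ Ico t (t + r)) => hstep j
  rw [sum_add_distrib, sum_add_distrib, hg.sum_Ico_comp_add_one,
    hh.sum_Ico_comp_add_one] at this
  exact (add_left_cancel this).symm

theorem sum_blocStart_eq_sum_blocEnd {M : Type*} [AddCommGroup M] (hb : Periodic b r) {f : ℤ → M}
    (hf : Periodic f r) (hconst : ∀ j, b (j + 1) = b j → f (j + 1) = f j) (t : ℤ) :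
    ∑ j ∈ Ico t (t + r), (if blocStart b j then f j else 0) =
      ∑ j ∈ Ico t (t + r), (if blocStart b (j + 1) then f j else 0) := by
  have hp : Periodic (fun j => if blocStart b j then f j else 0) r := fun j => by
    simp only [blocStart_periodic hb j, hf j]
  calc ∑ j ∈ Ico t (t + r), (if blocStart b j then f j else 0)
      = ∑ j ∈ Ico t (t + r), (if blocStart b (j + 1) then f (j + 1) else 0) :=
        (hp.sum_Ico_comp_add_one t).symm
    _ = ∑ j ∈ Ico t (t + r), ((if blocStart b (j + 1) then f j else 0) + (f (j + 1) - f j)) := by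
        refine sum_congr rfl fun j _ => ?_
        by_cases hs : blocStart b (j + 1)
        · simp only [hs, if_true, add_sub_cancel]
        · simp only [blocStart, add_sub_cancel_right, ne_eq, not_not] at hs
          simp [blocStart, hs, hconst j hs.symm]
    _ = ∑ j ∈ Ico t (t + r), (if blocStart b (j + 1) then f j else 0) := by
        rw [sum_add_distrib, sum_sub_distrib, hf.sum_Ico_comp_add_one, sub_self, add_zero]

theorem blocEps_eq (hb : Periodic b r) (hr : 0 < r) (hnc : ∃ x y, b x ≠ b y) {j : ℤ}
    (hj : blocStart b j) :
    blocEps b j = (if b (j - 1) < b j then 1 else 0) -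
      (if b j < b (j + blocLen b j) then 1 else 0) := by
  have hnext := (blocLen_isLeast hb hr hnc j).1.2
  unfold blocStart at hj
  unfold blocEps
  split_ifs <;> omega

theorem sum_blocEps_eq_count_partStart (hb : Periodic b r) (hr : 0 < r)
    (hnc : ∃ x y, b x ≠ b y) (t : ℤ) :
    ∑ j ∈ Ico t (t + r), (if blocStart b j ∧ 0 ≤ b j then blocEps b j else 0) =
      ∑ j ∈ Ico t (t + r), (if partStart b j then 1 else 0) := by
  set f : ℤ → ℤ := fun j => if 0 ≤ b j ∧ b j < b (j + blocLen b j) then 1 else 0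
  have hf : Periodic f r := fun j => by
    simp only [f, hb j, blocLen_periodic hb j, add_right_comm j r, hb (j + blocLen b j)]
  have hconst : ∀ j, b (j + 1) = b j → f (j + 1) = f j := fun j h => by
    simp only [f, add_blocLen_eq_of_eq hb hr hnc h, h]
  set g : ℤ → ℤ := fun j => if 0 ≤ b (j - 1) ∧ b (j - 1) < b j then 1 else 0
  have hg : Periodic g r := fun j => by
    simp only [g, hb j, show j + r - 1 = j - 1 + r by ring, hb (j - 1)]
  calc ∑ j ∈ Ico t (t + r), (if blocStart b j ∧ 0 ≤ b j then blocEps b j else 0)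
      = ∑ j ∈ Ico t (t + r),
          ((if 0 ≤ b j ∧ b (j - 1) < b j then 1 else 0) - if blocStart b j then f j else 0) := by
        refine sum_congr rfl fun j _ => ?_
        by_cases hs : blocStart b j
        · rw [blocEps_eq hb hr hnc hs]
          simp only [f, hs, true_and]
          split_ifs <;> omega
        · simp only [blocStart, ne_eq, not_not] at hs
          simp [blocStart, hs]
    _ = ∑ j ∈ Ico t (t + r), ((if 0 ≤ b j ∧ b (j - 1) < b j then 1 else 0) - g (j + 1)) := by
        rw [sum_sub_distrib, sum_blocStart_eq_sum_blocEnd hb hf hconst, ← sum_sub_distrib]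
        refine sum_congr rfl fun j _ => ?_
        by_cases hs : b j = b (j + 1)
        · simp [blocStart, g, hs]
        · simp [blocStart, f, g, blocLen_eq_one_of_ne (Ne.symm hs), hs]
    _ = ∑ j ∈ Ico t (t + r), (if partStart b j then 1 else 0) := by
        rw [sum_sub_distrib, hg.sum_Ico_comp_add_one, ← sum_sub_distrib]
        refine sum_congr rfl fun j _ => ?_
        simp only [g, partStart]
        split_ifs <;> omega

theorem partStart_and_zero_iff (hb : Periodic b r) (hr : 0 < r)
    (hnc : ∃ x y, b x ≠ b y) (j : ℤ) :
    (partStart b j ∧ ∀ x ∈ Ico j (j + partLen b j), b x = 0) ↔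
      blocStart b j ∧ b j = 0 ∧ blocEps b j = 1 := by
  constructor
  · rintro ⟨⟨-, hprev⟩, hzero⟩
    obtain ⟨⟨hpos, hend⟩, -⟩ := partLen_isLeast hb hr ⟨j - 1, hprev⟩ j
    have hj : b j = 0 := hzero j (by simp [hpos])
    have hlen : blocLen b j = partLen b j := by
      refine IsLeast.csInf_eq ⟨⟨hpos, by omega⟩, fun l ⟨hl, hbl⟩ => ?_⟩
      by_contra hlt
      exact hbl (by rw [hj]; exact hzero _ (by simp only [mem_Ico]; omega))
    refine ⟨by unfold blocStart; omega, hj, ?_⟩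
    unfold blocEps
    rw [hlen, if_pos ⟨by omega, by omega⟩]
  · rintro ⟨hs, hj, heps⟩
    obtain ⟨⟨hpos, -⟩, hmin⟩ := blocLen_isLeast hb hr hnc j
    have hconst : ∀ l, 0 < l → l < blocLen b j → b (j + l) = b j := fun l hl hlt => by
      by_contra hne
      exact absurd (hmin ⟨hl, hne⟩) (not_le.mpr hlt)
    have hmax : b (j - 1) < b j ∧ b (j + blocLen b j) < b j := by
      unfold blocEps at heps
      split_ifs at heps with h
      exacts [h, by omega]
    have hlen : partLen b j = blocLen b j := by
      refine IsLeast.csInf_eq ⟨⟨hpos, by omega⟩, fun l ⟨hl, hbl⟩ => ?_⟩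
      by_contra hlt
      have := hconst l hl (not_le.mp hlt)
      omega
    refine ⟨⟨hj.ge, by omega⟩, fun x hx => ?_⟩
    rw [hlen, mem_Ico] at hx
    rcases hx.1.eq_or_lt with rfl | hlt
    · exact hj
    · have := hconst (x - j) (by omega) (by omega)
      rwa [add_sub_cancel, hj] at this

theorem thetaSum_eq_gammaOne_add_gammaThree (hb : Periodic b r) (hr : 0 < r)
    (hnc : ∃ x y, b x ≠ b y) (t : ℤ) :
    thetaSum b r t = gammaOne b r t + gammaThree b r t := by
  have hparts : thetaSum b r t = gammaOne b r t +
      ∑ j ∈ Ico t (t + r), (if partStart b j then 1 else 0) -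
      ∑ j ∈ Ico t (t + r),
        (if partStart b j ∧ ∀ x ∈ Ico j (j + partLen b j), b x = 0 then 1 else 0) := by
    by_cases hall : ∀ j ∈ Ico t (t + r), 0 ≤ b j
    · have hnonneg : ∀ x, 0 ≤ b x := fun x => by
        obtain ⟨y, hy, hxy⟩ := hb.exists_mem_Ico hr x t
        exact hxy ▸ hall y (by simpa using hy)
      have hnoPart : ∀ j, ¬ partStart b j := fun j hj => (hnonneg (j - 1)).not_gt hj.2
      simp [thetaSum, gammaOne, hnonneg, hnoPart, hr.le]
    · obtain ⟨x, -, hx⟩ := not_forall₂.mp hall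
      rw [thetaSum, if_neg hall, gammaOne, ← sum_partLen_eq_count_nonneg hb hr ⟨x, not_le.mp hx⟩,
        ← sum_add_distrib, ← sum_sub_distrib]
      refine sum_congr rfl fun j _ => ?_
      unfold thetaP
      split_ifs <;> simp_all
  have hgammaThree : gammaThree b r t =
      ∑ j ∈ Ico t (t + r), (if blocStart b j ∧ 0 ≤ b j then blocEps b j else 0) -
      ∑ j ∈ Ico t (t + r), (if blocStart b j ∧ b j = 0 ∧ blocEps b j = 1 then 1 else 0) := by
    rw [gammaThree, ← sum_sub_distrib]
    refine sum_congr rfl fun j _ => ?_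
    unfold blocEpsStar
    split_ifs <;> simp_all
  simp only [hparts, hgammaThree, sum_blocEps_eq_count_partStart hb hr hnc,
    partStart_and_zero_iff hb hr hnc]
  ring

end Cycle

/-- The coefficient of `T ^ k` in `(1 - T) ^ 2 * Σ c k * T ^ k`. -/
def secondDiff (c : ℤ → ℤ) (k : ℤ) : ℤ := c k - 2 * c (k - 1) + c (k - 2)

/-- The coefficient of `T ^ k` in the summand of `P₄` for the entry `-n` with multiplicity `m`
and bloc sums `s`, `B`. -/
def pFourCoeff (n m s B k : ℤ) : ℤ :=
  if n % 3 = 1 then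
    (if k = (n + 2) / 3 then 2 * m - s else 0) +
      (if k = (n + 2) / 3 + 1 then m + s else 0)
  else if n % 3 = 2 then
    (if k = (n + 1) / 3 then m - s else 0) +
      (if k = (n + 1) / 3 + 1 then 2 * m + s else 0)
  else
    (if k = n / 3 then -s + B else 0) +
      (if k = n / 3 + 1 then 3 * m + s - 2 * B else 0) +
      (if k = n / 3 + 2 then B else 0)

theorem pFourCoeff_eq (n m s B k : ℤ) :
    pFourCoeff n m s B k =
      m * pFourCoeff n 1 0 0 k + s * pFourCoeff n 0 1 0 k + B * pFourCoeff n 0 0 1 k := by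
  unfold pFourCoeff
  split_ifs <;> ring

theorem secondDiff_max (v k : ℤ) :
    secondDiff (fun k => max (v + 3 * k) 0) k = pFourCoeff (-v) 1 0 0 k := by
  unfold secondDiff pFourCoeff
  simp only [max_def]
  split_ifs <;> omega

theorem secondDiff_indicator_nonneg (v k : ℤ) :
    secondDiff (fun k => if 0 ≤ v + 3 * k then 1 else 0) k = -pFourCoeff (-v) 0 1 0 k := by
  unfold secondDiff pFourCoeff
  dsimp only
  split_ifs <;> omega

theorem secondDiff_indicator_eq_zero (v k : ℤ) :
    secondDiff (fun k => if v + 3 * k = 0 then 1 else 0) k = pFourCoeff (-v) 0 0 1 k := by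
  unfold secondDiff pFourCoeff
  dsimp only
  split_ifs <;> omega

theorem secondDiff_sum {α : Type*} (W : Finset α) (f : α → ℤ → ℤ) (k : ℤ) :
    secondDiff (fun k => ∑ j ∈ W, f j k) k = ∑ j ∈ W, secondDiff (f j) k := by
  simp only [secondDiff, sum_add_distrib, sum_sub_distrib, mul_sum]

/-- The share of an entry `v` in `γ₄(a(k))`, using
`max (v + 3k + 1) 0 - [0 ≤ v + 3k] = max (v + 3k) 0`. -/
def gammaFourTerm (v e β k : ℤ) : ℤ :=
  max (v + 3 * k) 0 - e * (if 0 ≤ v + 3 * k then 1 else 0) +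
    β * (if v + 3 * k = 0 then 1 else 0)

theorem secondDiff_gammaFourTerm (v e β k : ℤ) :
    secondDiff (gammaFourTerm v e β) k = pFourCoeff (-v) 1 e β k := by
  have hmax := secondDiff_max v k
  have hnonneg := secondDiff_indicator_nonneg v k
  have hzero := secondDiff_indicator_eq_zero v k
  simp only [secondDiff, gammaFourTerm] at *
  linear_combination hmax - e * hnonneg + β * hzero - pFourCoeff_eq (-v) 1 e β k

theorem blocStart_add_const (b : ℤ → ℤ) (c j : ℤ) :
    blocStart (fun x => b x + c) j ↔ blocStart b j := by
  simp only [blocStart, ne_eq, add_left_inj]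

theorem blocLen_add_const (b : ℤ → ℤ) (c j : ℤ) : blocLen (fun x => b x + c) j = blocLen b j := by
  simp only [blocLen, ne_eq, add_left_inj]

theorem blocEps_add_const (b : ℤ → ℤ) (c j : ℤ) : blocEps (fun x => b x + c) j = blocEps b j := by
  simp only [blocEps, blocLen_add_const, add_lt_add_iff_right]

theorem sum_max_sub_thetaSum_eq {b : ℤ → ℤ} {r : ℤ} (hb : Periodic b r) (hr : 0 < r)
    (hnc : ∃ x y, b x ≠ b y) (t k : ℤ) :
    (∑ j ∈ Ico t (t + r), max (b j + 3 * k + 1) 0) - thetaSum (fun j => b j + 3 * k) r t =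
      ∑ j ∈ Ico t (t + r), gammaFourTerm (b j) (if blocStart b j then blocEps b j else 0)
        (if blocStart b j ∧ blocEps b j = 1 then 1 else 0) k := by
  obtain ⟨x, y, hxy⟩ := hnc
  rw [thetaSum_eq_gammaOne_add_gammaThree (fun j => by simp only [hb j]) hr
    ⟨x, y, by simpa using hxy⟩]
  simp only [gammaOne, gammaThree, blocEpsStar, blocStart_add_const, blocEps_add_const,
    ← sum_add_distrib, ← sum_sub_distrib]
  refine sum_congr rfl fun j _ => ?_
  by_cases hs : blocStart b j <;>
    simp only [gammaFourTerm, max_def, hs, true_and, false_and, ↓reduceIte] <;> split_ifs <;> omega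

theorem sum_pFourCoeff_eq {α ι : Type*} [Fintype ι] (W : Finset α) (a : α → ℤ) (n : ι → ℤ)
    (hn : Injective n) (hcover : ∀ j ∈ W, ∃ i, a j = -n i) (m s B : ι → ℤ)
    (e β : α → ℤ) (hm : ∀ i, m i = (W.filter fun j => a j = -n i).card)
    (hs : ∀ i, s i = ∑ j ∈ W, if a j = -n i then e j else 0)
    (hB : ∀ i, B i = ∑ j ∈ W, if a j = -n i then β j else 0) (k : ℤ) :
    ∑ i, pFourCoeff (n i) (m i) (s i) (B i) k = ∑ j ∈ W, pFourCoeff (-a j) 1 (e j) (β j) k := by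
  calc ∑ i, pFourCoeff (n i) (m i) (s i) (B i) k
      = ∑ i, ∑ j ∈ W, if a j = -n i then pFourCoeff (-a j) 1 (e j) (β j) k else 0 := by
        refine sum_congr rfl fun i _ => ?_
        rw [pFourCoeff_eq, hm, hs, hB, card_filter, Nat.cast_sum, sum_mul, sum_mul, sum_mul,
          ← sum_add_distrib, ← sum_add_distrib]
        refine sum_congr rfl fun j _ => ?_
        split_ifs with h
        · rw [pFourCoeff_eq (-a j), h, neg_neg]; ring
        · simp
    _ = ∑ j ∈ W, pFourCoeff (-a j) 1 (e j) (β j) k := by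
        rw [sum_comm]
        refine sum_congr rfl fun j hj => ?_
        obtain ⟨i, hi⟩ := hcover j hj
        rw [sum_eq_single i (fun i' _ hi' => if_neg fun h => hi' (hn (by omega))) (by simp),
          if_pos hi]

theorem P_four_formula_general (a : ℤ → ℤ) (r : ℤ) (hr : 1 < r)
    (hap : CycleAperiodic a r) (t : ℤ)
    (ι : Type*) [Fintype ι] (n : ι → ℤ)
    (hninj : Function.Injective n)
    (hcover : ∀ j ∈ Finset.Ico t (t + r), ∃ i, a j = -n i)
    (m : ι → ℤ)
    (hm : ∀ i, m i = ((Finset.Ico t (t + r)).filter fun j => a j = -n i).card)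
    (s B : ι → ℤ)
    (hs : ∀ i, s i = ∑ j ∈ Finset.Ico t (t + r),
      if blocStart a j ∧ a j = -n i then blocEps a j else 0)
    (hB : ∀ i, B i = ∑ j ∈ Finset.Ico t (t + r),
      if blocStart a j ∧ a j = -n i ∧ blocEps a j = 1 then 1 else 0) :
    ∀ k : ℤ,
      (fun c : ℤ → ℤ => c k - 2 * c (k - 1) + c (k - 2))
        (fun k' => (∑ j ∈ Finset.Ico t (t + r), max (a j + 3 * k' + 1) 0) -
          thetaSum (fun j => a j + 3 * k') r t) =
        ∑ i,
          if n i % 3 = 1 then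
            (if k = (n i + 2) / 3 then 2 * m i - s i else 0) +
              (if k = (n i + 2) / 3 + 1 then m i + s i else 0)
          else if n i % 3 = 2 then
            (if k = (n i + 1) / 3 then m i - s i else 0) +
              (if k = (n i + 1) / 3 + 1 then 2 * m i + s i else 0)
          else
            (if k = n i / 3 then -s i + B i else 0) +
              (if k = n i / 3 + 1 then 3 * m i + s i - 2 * B i else 0) +
              (if k = n i / 3 + 2 then B i else 0) := by
  intro k
  obtain ⟨x, hx⟩ : ∃ x, a (x + 1) ≠ a x := by
    simpa [CyclePeriodic] using hap.2 1 one_pos hr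
  have hs' : ∀ i, s i = ∑ j ∈ Ico t (t + r),
      if a j = -n i then (if blocStart a j then blocEps a j else 0) else 0 := fun i =>
    (hs i).trans (sum_congr rfl fun j _ => by split_ifs <;> simp_all)
  have hB' : ∀ i, B i = ∑ j ∈ Ico t (t + r),
      if a j = -n i then (if blocStart a j ∧ blocEps a j = 1 then 1 else 0) else 0 := fun i =>
    (hB i).trans (sum_congr rfl fun j _ => by split_ifs <;> simp_all)
  change _ = ∑ i, pFourCoeff (n i) (m i) (s i) (B i) k
  change secondDiff (fun k' => (∑ j ∈ Ico t (t + r), max (a j + 3 * k' + 1) 0) -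
    thetaSum (fun j => a j + 3 * k') r t) k = _
  simp_rw [sum_max_sub_thetaSum_eq hap.1 (by omega) ⟨x + 1, x, hx⟩]
  rw [secondDiff_sum, sum_pFourCoeff_eq _ a n hninj hcover m s B _ _ hm hs' hB']
  exact sum_congr rfl fun j _ => secondDiff_gammaFourTerm _ _ _ _

/-- Theorem 2.15: for an aperiodic cycle of length `r > 1` with distinct entries
`-n i` of multiplicity `m i`, with `s i`, `B i` as defined from the blocs, and
`γ₄(a) = Σ max(aⱼ+1, 0) − θ(a)`, the Laurent polynomial
`P₄(a) = (1-T)² Σ_k γ₄(a(k)) Tᵏ` (given coefficient-wise by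
`c k - 2c(k-1) + c(k-2)` with `c k = γ₄(a(k))`) is the sum over `i` of:
`T^{(nᵢ+2)/3}((2mᵢ−sᵢ) + (mᵢ+sᵢ)T)` if `nᵢ ≡ 1 (3)`,
`T^{(nᵢ+1)/3}((mᵢ−sᵢ) + (2mᵢ+sᵢ)T)` if `nᵢ ≡ 2 (3)`, and
`T^{nᵢ/3}(−sᵢ + (3mᵢ+sᵢ)T + Bᵢ(1−T)²)` if `nᵢ ≡ 0 (3)`. -/
theorem P_four_formula (a : ℤ → ℤ) (r : ℤ) (hr : 1 < r)
    (hap : CycleAperiodic a r) (t : ℤ)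
    (ι : Type*) [Fintype ι] [DecidableEq ι] (n : ι → ℤ)
    (hninj : Function.Injective n)
    (hcover : ∀ j ∈ Finset.Ico t (t + r), ∃ i, a j = -n i)
    (honto : ∀ i, ∃ j ∈ Finset.Ico t (t + r), a j = -n i)
    (m : ι → ℤ)
    (hm : ∀ i, m i = ((Finset.Ico t (t + r)).filter fun j => a j = -n i).card)
    (s B : ι → ℤ)
    (hs : ∀ i, s i = ∑ j ∈ Finset.Ico t (t + r),
      if blocStart a j ∧ a j = -n i then blocEps a j else 0)
    (hB : ∀ i, B i = ∑ j ∈ Finset.Ico t (t + r),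
      if blocStart a j ∧ a j = -n i ∧ blocEps a j = 1 then 1 else 0) :
    ∀ k : ℤ,
      (fun c : ℤ → ℤ => c k - 2 * c (k - 1) + c (k - 2))
        (fun k' => (∑ j ∈ Finset.Ico t (t + r), max (a j + 3 * k' + 1) 0) -
          thetaSum (fun j => a j + 3 * k') r t) =
        ∑ i,
          if n i % 3 = 1 then
            (if k = (n i + 2) / 3 then 2 * m i - s i else 0) +
              (if k = (n i + 2) / 3 + 1 then m i + s i else 0)
          else if n i % 3 = 2 then
            (if k = (n i + 1) / 3 then m i - s i else 0) +
              (if k = (n i + 1) / 3 + 1 then 2 * m i + s i else 0)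
          else
            (if k = n i / 3 then -s i + B i else 0) +
              (if k = n i / 3 + 1 then 3 * m i + s i - 2 * B i else 0) +
              (if k = n i / 3 + 2 then B i else 0) :=
  P_four_formula_general a r hr hap t ι n hninj hcover m hm s B hs hB
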